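/- arXiv:0805.4253 — 4 statements merged into one kernel-verified Lean document; each statement's English description precedes it below -/
import Mathlib

section
/- Let F be the free group on two generators x and y, and let φ : F → F be the homomorphism determined by φ(x) = [[y,x],x] and φ(y) = [[y,x],y], where [a,b] = a b a⁻¹ b⁻¹. Then φ is injective, and for every i ≥ 1 one has φ(F_i) ⊆ F_{i+1}; in particular, the induced map F_i/F_{i+1} → F_i/F_{i+1} on each graded quotient of the lower central series is the zero map. -/
/-! The two images are `⁅c, x⁆` and `⁅c, y⁆` with `c = ⁅y, x⁆`, so `φ` maps `F` into `[F, F]`;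
as `F_{i+1} = [F_i, F]`, induction on `i` gives `φ(F_{i+1}) ⊆ [φ(F_i), φ(F)] ⊆ [F_{i+1}, F]`.

Injectivity is ping-pong. The reduced words of `φ(x)^{±1}` and `φ(y)^{±1}` have length at
least 7 and begin with four different words of length 4. Multiplying a reduced word on the left
by such an element `g` cancels at most three letters of `g` unless the word begins like `g⁻¹`,
so the sets of elements whose reduced word begins with one of these four prefixes form a
ping-pong table. -/

open scoped commutatorElement

namespace FreeGroup

universe u

variable {α : Type u} [DecidableEq α]

theorem IsReduced.exists_reduce_append_eq {L₁ L₂ : List (α × Bool)} (h₁ : IsReduced L₁)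
    (h₂ : IsReduced L₂) :
    ∃ L₁' c L₂', L₁ = L₁' ++ c ∧ L₂ = invRev c ++ L₂' ∧ reduce (L₁ ++ L₂) = L₁' ++ L₂' := by
  induction L₁ using List.reverseRecOn generalizing L₂ with
  | nil => exact ⟨[], [], L₂, rfl, by simp, h₂.reduce_eq⟩
  | append_singleton M a ih =>
    rcases L₂ with _ | ⟨b, N⟩
    · exact ⟨M ++ [a], [], [], by simp, by simp, by simpa using h₁.reduce_eq⟩
    by_cases hb : b = (a.1, !a.2)
    · subst hb
      obtain ⟨M', c, N', rfl, rfl, hred⟩ :=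
        ih (h₁.infix (List.prefix_append _ _).isInfix) (h₂.infix (List.suffix_cons _ _).isInfix)
      refine ⟨M', c ++ [a], N', by simp, by simp [invRev], ?_⟩
      have hstep : Red.Step (M' ++ c ++ [a] ++ (a.1, !a.2) :: (invRev c ++ N'))
          (M' ++ c ++ (invRev c ++ N')) := by
        simpa using Red.Step.not (L₁ := M' ++ c) (L₂ := invRev c ++ N') (x := a.1) (b := a.2)
      rw [reduce.Step.eq hstep, hred]
    · refine ⟨M ++ [a], [], b :: N, by simp, by simp, IsReduced.reduce_eq ?_⟩
      refine h₁.append h₂ fun x hx y hy => ?_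
      simp only [List.getLast?_concat, List.head?_cons, Option.mem_def, Option.some.injEq] at hx hy
      subst hx hy
      intro h
      by_contra h'
      exact hb (Prod.ext h.symm (by grind))

theorem exists_toWord_mul_eq_append (g w : FreeGroup α) :
    ∃ u c v, g.toWord = u ++ c ∧ w.toWord = invRev c ++ v ∧ (g * w).toWord = u ++ v := by
  rw [toWord_mul]
  exact isReduced_toWord.exists_reduce_append_eq isReduced_toWord

theorem take_toWord_mul_of_ne {g w : FreeGroup α} {n : ℕ} (hg : 2 * n ≤ g.toWord.length + 1)
    (hw : w.toWord.take n ≠ g⁻¹.toWord.take n) : (g * w).toWord.take n = g.toWord.take n := by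
  obtain ⟨u, c, v, hg', hw', hgw⟩ := exists_toWord_mul_eq_append g w
  have hlen : u.length + c.length = g.toWord.length := by simp [hg']
  rw [toWord_inv, hg', invRev_append, hw'] at hw
  rw [hgw, hg']
  by_cases hc : n ≤ c.length
  · refine absurd ?_ hw
    rw [List.take_append_of_le_length (by rwa [invRev_length]),
      List.take_append_of_le_length (by rwa [invRev_length])]
  · rw [List.take_append_of_le_length (by omega), List.take_append_of_le_length (by omega)]

-- `injective_lift_of_ping_pong` needs the index type and the group in the same universe.
theorem injective_lift_of_take_toWord {ι : Type u} [Nontrivial ι] (a : ι → FreeGroup α) (n : ℕ)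
    (hlen : ∀ i, 2 * n ≤ (a i).toWord.length + 1)
    (hX : Pairwise fun i j => (a i).toWord.take n ≠ (a j).toWord.take n)
    (hY : Pairwise fun i j => (a i)⁻¹.toWord.take n ≠ (a j)⁻¹.toWord.take n)
    (hXY : ∀ i j, (a i).toWord.take n ≠ (a j)⁻¹.toWord.take n) :
    Function.Injective (lift a) := by
  set X : ι → Set (FreeGroup α) := fun i => {w | w.toWord.take n = (a i).toWord.take n}
  set Y : ι → Set (FreeGroup α) := fun i => {w | w.toWord.take n = (a i)⁻¹.toWord.take n}
  refine injective_lift_of_ping_pong a X Y (fun i => ⟨a i, rfl⟩)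
    (fun i j hij => Set.disjoint_left.2 fun w hi hj => hX hij (hi.symm.trans hj))
    (fun i j hij => Set.disjoint_left.2 fun w hi hj => hY hij (hi.symm.trans hj))
    (fun i j => Set.disjoint_left.2 fun w hi hj => hXY i j (hi.symm.trans hj)) ?_ ?_
  · rintro i _ ⟨w, hw, rfl⟩
    exact take_toWord_mul_of_ne (hlen i) hw
  · rintro i _ ⟨w, hw, rfl⟩
    have hlen' : 2 * n ≤ (a i)⁻¹.toWord.length + 1 := by
      simpa [toWord_inv, invRev_length] using hlen i
    exact take_toWord_mul_of_ne hlen' (by rwa [Pi.inv_apply, inv_inv])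

end FreeGroup

namespace Subgroup

variable {G : Type*} [Group G]

theorem lowerCentralSeries_le_of_le_lowerCentralSeries {S T : Subgroup G} {k : ℕ}
    (h : S ≤ T.lowerCentralSeries k) (n : ℕ) :
    S.lowerCentralSeries n ≤ T.lowerCentralSeries (n + k) := by
  induction n with
  | zero => simpa using h
  | succ n ih =>
    rw [lowerCentralSeries_succ, Nat.add_right_comm, lowerCentralSeries_succ]
    exact commutator_mono ih (h.trans (T.lowerCentralSeries_le_self k))

end Subgroup

theorem MonoidHom.map_lowerCentralSeries_le {G H : Type*} [Group G] [Group H] {f : G →* H}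
    {k : ℕ} (hf : f.range ≤ (⊤ : Subgroup H).lowerCentralSeries k) (n : ℕ) :
    ((⊤ : Subgroup G).lowerCentralSeries n).map f ≤
      (⊤ : Subgroup H).lowerCentralSeries (n + k) := by
  rw [Subgroup.map_lowerCentralSeries, ← MonoidHom.range_eq_map]
  exact Subgroup.lowerCentralSeries_le_of_le_lowerCentralSeries hf n

/-- Let `F` be the free group on two generators `x, y` and let
`φ : F → F` be the homomorphism with `φ(x) = [[y,x],x]` and `φ(y) = [[y,x],y]`.
Then `φ` is injective and `φ(F_i) ⊆ F_{i+1}` for all `i ≥ 1`; in particular the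
induced map on each graded quotient of the lower central series is zero. -/
theorem injective_hom_inducing_zero_on_lie_ring :
    ∀ φ : FreeGroup Bool →* FreeGroup Bool,
      φ (FreeGroup.of false) =
          ⁅⁅FreeGroup.of true, FreeGroup.of false⁆, FreeGroup.of false⁆ →
      φ (FreeGroup.of true) =
          ⁅⁅FreeGroup.of true, FreeGroup.of false⁆, FreeGroup.of true⁆ →
      Function.Injective φ ∧
        ∀ i : ℕ, Subgroup.map φ ((⊤ : Subgroup (FreeGroup Bool)).lowerCentralSeries i) ≤
          (⊤ : Subgroup (FreeGroup Bool)).lowerCentralSeries (i + 1) := by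
  intro φ hx hy
  obtain rfl :
      φ = FreeGroup.lift fun b => ⁅⁅FreeGroup.of true, FreeGroup.of false⁆, FreeGroup.of b⁆ := by
    ext (_ | _) <;> simp [hx, hy]
  refine ⟨FreeGroup.injective_lift_of_take_toWord _ 4 (by decide) (by unfold Pairwise; decide)
    (by unfold Pairwise; decide) (by decide), ?_⟩
  refine MonoidHom.map_lowerCentralSeries_le (FreeGroup.range_lift_le ?_)
  rintro _ ⟨b, rfl⟩
  exact Subgroup.commutator_mem_commutator (Subgroup.mem_top _) (Subgroup.mem_top _)
end

section
/- Let g ≥ 1 and let F be the free group on the 2g generators a₁, …, a_g, b₁, …, b_g. Then the element w = [[a₁,b₁][a₂,b₂]⋯[a_g,b_g], b_g] (where [a,b] = a b a⁻¹ b⁻¹) lies in the third term F₃ of the lower central series of F but does not lie in the fourth term F₄. (This element is t_*(b_g)·b_g⁻¹ for the Dehn twist t about a curve parallel to the boundary of a genus-g surface with one boundary component, and shows that [t] ∉ 𝒥(4).) -/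
/-!
Membership of `w` in `F₃` is formal. For `w ∉ F₄`, map `F` to the class-3 nilpotent group of
unitriangular `4 × 4` integer matrices whose `(2,3)` and `(3,4)` entries agree, sending `a_g` to
`X = 1 + E₁₂`, `b_g` to `Y = 1 + E₂₃ + E₃₄` and every other generator to `1`. Then `w` goes to
`[[X, Y], Y] = 1 + E₁₄ ≠ 1`, while the image of `F₄` is trivial.
-/

open scoped commutatorElement

/-- The group law of the unitriangular integer matrices
`!![1, a, c, d; 0, 1, b, e; 0, 0, 1, b; 0, 0, 0, 1]`. -/
@[ext] structure ClassThreeGroup where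
  a : ℤ
  b : ℤ
  c : ℤ
  d : ℤ
  e : ℤ

namespace ClassThreeGroup

instance : Mul ClassThreeGroup :=
  ⟨fun x y => ⟨x.a + y.a, x.b + y.b, x.c + y.c + x.a * y.b,
    x.d + y.d + x.a * y.e + x.c * y.b, x.e + y.e + x.b * y.b⟩⟩

instance : One ClassThreeGroup := ⟨⟨0, 0, 0, 0, 0⟩⟩

instance : Inv ClassThreeGroup :=
  ⟨fun x => ⟨-x.a, -x.b, x.a * x.b - x.c,
    -x.d + x.a * x.e - x.a * x.b ^ 2 + x.c * x.b, x.b ^ 2 - x.e⟩⟩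

@[simp] theorem mul_a (x y : ClassThreeGroup) : (x * y).a = x.a + y.a := rfl
@[simp] theorem mul_b (x y : ClassThreeGroup) : (x * y).b = x.b + y.b := rfl
@[simp] theorem mul_c (x y : ClassThreeGroup) : (x * y).c = x.c + y.c + x.a * y.b := rfl
@[simp] theorem mul_d (x y : ClassThreeGroup) :
    (x * y).d = x.d + y.d + x.a * y.e + x.c * y.b := rfl
@[simp] theorem mul_e (x y : ClassThreeGroup) : (x * y).e = x.e + y.e + x.b * y.b := rfl
@[simp] theorem one_a : (1 : ClassThreeGroup).a = 0 := rfl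
@[simp] theorem one_b : (1 : ClassThreeGroup).b = 0 := rfl
@[simp] theorem one_c : (1 : ClassThreeGroup).c = 0 := rfl
@[simp] theorem one_d : (1 : ClassThreeGroup).d = 0 := rfl
@[simp] theorem one_e : (1 : ClassThreeGroup).e = 0 := rfl
@[simp] theorem inv_a (x : ClassThreeGroup) : x⁻¹.a = -x.a := rfl
@[simp] theorem inv_b (x : ClassThreeGroup) : x⁻¹.b = -x.b := rfl
@[simp] theorem inv_c (x : ClassThreeGroup) : x⁻¹.c = x.a * x.b - x.c := rfl
@[simp] theorem inv_d (x : ClassThreeGroup) :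
    x⁻¹.d = -x.d + x.a * x.e - x.a * x.b ^ 2 + x.c * x.b := rfl
@[simp] theorem inv_e (x : ClassThreeGroup) : x⁻¹.e = x.b ^ 2 - x.e := rfl

instance : Group ClassThreeGroup where
  mul_assoc x y z := by ext <;> simp <;> ring
  one_mul x := by ext <;> simp
  mul_one x := by ext <;> simp
  inv_mul_cancel x := by ext <;> simp <;> ring

def X : ClassThreeGroup := ⟨1, 0, 0, 0, 0⟩

def Y : ClassThreeGroup := ⟨0, 1, 0, 0, 0⟩

theorem commutatorElement_commutatorElement_X_Y_Y_ne_one : ⁅⁅X, Y⁆, Y⁆ ≠ 1 := by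
  intro h
  simpa [commutatorElement_def, X, Y] using congrArg d h

def abKernel : Subgroup ClassThreeGroup where
  carrier := {x | x.a = 0 ∧ x.b = 0}
  mul_mem' := by rintro x y ⟨hxa, hxb⟩ ⟨hya, hyb⟩; simp_all
  one_mem' := ⟨rfl, rfl⟩
  inv_mem' := by rintro x ⟨ha, hb⟩; simp_all

theorem lowerCentralSeries_one_le_abKernel :
    (⊤ : Subgroup ClassThreeGroup).lowerCentralSeries 1 ≤ abKernel :=
  Subgroup.commutator_le.2 fun x _ y _ => by
    constructor <;> simp [commutatorElement_def]

theorem lowerCentralSeries_two_le_center :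
    (⊤ : Subgroup ClassThreeGroup).lowerCentralSeries 2 ≤ Subgroup.center ClassThreeGroup :=
  Subgroup.commutator_le.2 fun x hx y _ => by
    obtain ⟨hxa, hxb⟩ := lowerCentralSeries_one_le_abKernel hx
    refine Subgroup.mem_center_iff.2 fun z => ?_
    ext <;> simp [hxa, hxb, commutatorElement_def] <;> ring

theorem lowerCentralSeries_three_eq_bot :
    (⊤ : Subgroup ClassThreeGroup).lowerCentralSeries 3 = ⊥ :=
  Subgroup.lowerCentralSeries_succ_eq_bot _ lowerCentralSeries_two_le_center

end ClassThreeGroup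

theorem List.prod_ofFn_eq_of_ne_eq_one {M : Type*} [Monoid M] {n : ℕ} (f : Fin n → M)
    (j : Fin n) (hf : ∀ i ≠ j, f i = 1) : (List.ofFn f).prod = f j := by
  induction n with
  | zero => exact j.elim0
  | succ n ih =>
    rw [List.ofFn_succ, List.prod_cons]
    cases j using Fin.cases with
    | zero =>
      rw [List.prod_eq_one, mul_one]
      simpa [List.mem_ofFn] using fun i => hf i.succ (Fin.succ_ne_zero i)
    | succ k =>
      rw [hf 0 (Fin.succ_ne_zero k).symm, one_mul]
      exact ih _ k fun i hi => hf i.succ (Fin.succ_injective _ |>.ne hi)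

theorem Subgroup.commutatorElement_mem_lowerCentralSeries_succ {G : Type*} [Group G] {n : ℕ}
    {x : G} (hx : x ∈ (⊤ : Subgroup G).lowerCentralSeries n) (y : G) :
    ⁅x, y⁆ ∈ (⊤ : Subgroup G).lowerCentralSeries (n + 1) :=
  Subgroup.commutator_mem_commutator hx (Subgroup.mem_top y)

theorem Subgroup.prod_ofFn_commutatorElement_mem_lowerCentralSeries_one {G : Type*} [Group G]
    {n : ℕ} (x y : Fin n → G) :
    (List.ofFn fun i => ⁅x i, y i⁆).prod ∈ (⊤ : Subgroup G).lowerCentralSeries 1 :=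
  list_prod_mem <| by
    simpa [List.mem_ofFn] using fun i =>
      commutatorElement_mem_lowerCentralSeries_succ (n := 0) (Subgroup.mem_top (x i)) (y i)

theorem Subgroup.notMem_lowerCentralSeries_of_map {G K : Type*} [Group G] [Group K] {n : ℕ}
    (hK : (⊤ : Subgroup K).lowerCentralSeries n = ⊥) (φ : G →* K) {x : G} (hx : φ x ≠ 1) :
    x ∉ (⊤ : Subgroup G).lowerCentralSeries n := fun hmem =>
  hx <| Subgroup.mem_bot.1 <| hK ▸ Subgroup.lowerCentralSeries_mono n le_top
    (Subgroup.map_lowerCentralSeries _ φ n ▸ Subgroup.mem_map_of_mem φ hmem)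

theorem FreeGroup.lift_prod_ofFn_commutatorElement {K : Type*} [Group K] {n : ℕ}
    (j : Fin n) (x y : K) :
    FreeGroup.lift (Sum.elim (Pi.mulSingle j x) (Pi.mulSingle j y))
      (List.ofFn fun i => ⁅(of (Sum.inl i) : FreeGroup (Fin n ⊕ Fin n)), of (Sum.inr i)⁆).prod =
        ⁅x, y⁆ := by
  rw [map_list_prod, List.map_ofFn, List.prod_ofFn_eq_of_ne_eq_one _ j]
  · simp
  · intro i hi
    simp [Pi.mulSingle_eq_of_ne hi]

/-- In the free group `F` on generators `a₁,…,a_g,b₁,…,b_g` (`g ≥ 1`),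
the element `w = [[a₁,b₁][a₂,b₂]⋯[a_g,b_g], b_g]` lies in the third term `F₃`
of the lower central series (`= lowerCentralSeries F 2`) but not in the fourth
term `F₄` (`= lowerCentralSeries F 3`). -/
theorem boundary_twist_element_in_third_not_fourth_lcs
    (g : ℕ) (hg : 1 ≤ g)
    (a b : Fin g → FreeGroup (Fin g ⊕ Fin g))
    (ha : ∀ i, a i = FreeGroup.of (Sum.inl i))
    (hb : ∀ i, b i = FreeGroup.of (Sum.inr i))
    (w : FreeGroup (Fin g ⊕ Fin g))
    (hw : w = ⁅(List.ofFn fun i => ⁅a i, b i⁆).prod, b ⟨g - 1, by omega⟩⁆) :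
    w ∈ (⊤ : Subgroup (FreeGroup (Fin g ⊕ Fin g))).lowerCentralSeries 2 ∧
      w ∉ (⊤ : Subgroup (FreeGroup (Fin g ⊕ Fin g))).lowerCentralSeries 3 := by
  subst hw
  refine ⟨Subgroup.commutatorElement_mem_lowerCentralSeries_succ
    (Subgroup.prod_ofFn_commutatorElement_mem_lowerCentralSeries_one a b) _, ?_⟩
  obtain rfl : a = fun i => FreeGroup.of (Sum.inl i) := funext ha
  obtain rfl : b = fun i => FreeGroup.of (Sum.inr i) := funext hb
  set j : Fin g := ⟨g - 1, by omega⟩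
  refine Subgroup.notMem_lowerCentralSeries_of_map
    ClassThreeGroup.lowerCentralSeries_three_eq_bot
    (FreeGroup.lift (Sum.elim (Pi.mulSingle j .X) (Pi.mulSingle j .Y))) ?_
  rw [map_commutatorElement, FreeGroup.lift_prod_ofFn_commutatorElement, FreeGroup.lift_apply_of,
    Sum.elim_inr, Pi.mulSingle_eq_same]
  exact ClassThreeGroup.commutatorElement_commutatorElement_X_Y_Y_ne_one
end

section
/- (Falk–Randell) Let 1 → A → B → C → 1 be a split short exact sequence of groups; regard A as a normal subgroup of B and C (via the splitting) as a subgroup of B. Assume [C, A] ⊆ [A, A]. Then for every k ≥ 1 there is a short exact sequence of abelian groups 1 → A_k/A_{k+1} → B_k/B_{k+1} → C_k/C_{k+1} → 1, where the first map is induced by the inclusion A → B and the second by the projection B → C: the induced map A_k/A_{k+1} → B_k/B_{k+1} is injective, the induced map B_k/B_{k+1} → C_k/C_{k+1} is surjective, and the image of the first equals the kernel of the second. -/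
open Subgroup
open scoped commutatorElement

/-! Put `N = ι(A)`, a normal subgroup of `B`, and `H = s(C)`, so that `B = N ⊔ H`. The hypothesis
`⁅H, N⁆ ≤ ⁅N, N⁆` propagates through the three subgroups lemma to `⁅H_m, N_n⁆ ≤ N_{m+n+1}` and
then to `⁅B, N_n⁆ ≤ N_{n+1}`. Hence `n ↦ N_n ⊔ H_n` is a descending central series of `B`, which
forces `B_n = N_n H_n`: every `b ∈ B_n` is `ι a * s c` with `a ∈ A_n` and `c ∈ C_n`, and the
exactness of the graded sequence is read off from this decomposition. -/

namespace Subgroup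

variable {G : Type*} [Group G]

theorem commutator_commutator_le_of_rotate {H₁ H₂ H₃ N : Subgroup G} [N.Normal]
    (h1 : ⁅⁅H₂, H₃⁆, H₁⁆ ≤ N) (h2 : ⁅⁅H₃, H₁⁆, H₂⁆ ≤ N) : ⁅⁅H₁, H₂⁆, H₃⁆ ≤ N := by
  have le_iff_map_eq_bot : ∀ {K : Subgroup G}, K ≤ N ↔ K.map (QuotientGroup.mk' N) = ⊥ := by
    intro K
    rw [map_eq_bot_iff, QuotientGroup.ker_mk']
  simp only [le_iff_map_eq_bot, map_commutator] at h1 h2 ⊢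
  exact commutator_commutator_eq_bot_of_rotate h1 h2

theorem commutator_lowerCentralSeries_le (S : Subgroup G) [S.Normal] (i j : ℕ) :
    ⁅S.lowerCentralSeries i, S.lowerCentralSeries j⁆ ≤ S.lowerCentralSeries (i + j + 1) := by
  induction i generalizing j with
  | zero => rw [zero_add, commutator_comm]; rfl
  | succ i ih =>
    apply commutator_commutator_le_of_rotate
    · calc ⁅⁅S, S.lowerCentralSeries j⁆, S.lowerCentralSeries i⁆
            = ⁅S.lowerCentralSeries i, S.lowerCentralSeries (j + 1)⁆ := by
              rw [commutator_comm S, commutator_comm]; rfl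
          _ ≤ S.lowerCentralSeries (i + 1 + j + 1) := by
              convert ih (j + 1) using 2; omega
    · calc ⁅⁅S.lowerCentralSeries j, S.lowerCentralSeries i⁆, S⁆
            ≤ ⁅S.lowerCentralSeries (i + j + 1), S⁆ := by
              rw [commutator_comm (S.lowerCentralSeries j)]; exact commutator_mono (ih j) le_rfl
          _ = S.lowerCentralSeries (i + 1 + j + 1) := by
              rw [← lowerCentralSeries_succ]; congr 1; omega

theorem apply_mem_top_lowerCentralSeries {K : Type*} [Group K] (f : G →* K) {n : ℕ} {g : G}
    (hg : g ∈ (⊤ : Subgroup G).lowerCentralSeries n) :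
    f g ∈ (⊤ : Subgroup K).lowerCentralSeries n :=
  lowerCentralSeries_mono n le_top
    (map_lowerCentralSeries (⊤ : Subgroup G) f n ▸ mem_map_of_mem f hg)

section SemidirectProduct

variable {N H : Subgroup G} [N.Normal]

theorem commutator_lowerCentralSeries_le_of_commutator_le (hHN : ⁅H, N⁆ ≤ ⁅N, N⁆) (n : ℕ) :
    ⁅H, N.lowerCentralSeries n⁆ ≤ N.lowerCentralSeries (n + 1) := by
  induction n with
  | zero => exact hHN
  | succ n ih =>
    rw [lowerCentralSeries_succ, commutator_comm]
    apply commutator_commutator_le_of_rotate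
    · calc ⁅⁅N, H⁆, N.lowerCentralSeries n⁆
            ≤ ⁅N.lowerCentralSeries 1, N.lowerCentralSeries n⁆ :=
              commutator_mono (by rw [commutator_comm]; exact hHN) le_rfl
          _ ≤ N.lowerCentralSeries (n + 1 + 1) := by
              convert N.commutator_lowerCentralSeries_le 1 n using 2; omega
    · exact commutator_mono ih le_rfl

theorem commutator_lowerCentralSeries_lowerCentralSeries_le_of_commutator_le
    (hHN : ⁅H, N⁆ ≤ ⁅N, N⁆) (m n : ℕ) :
    ⁅H.lowerCentralSeries m, N.lowerCentralSeries n⁆ ≤ N.lowerCentralSeries (m + n + 1) := by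
  induction m generalizing n with
  | zero => rw [zero_add]; exact commutator_lowerCentralSeries_le_of_commutator_le hHN n
  | succ m ih =>
    apply commutator_commutator_le_of_rotate
    · calc ⁅⁅H, N.lowerCentralSeries n⁆, H.lowerCentralSeries m⁆
            ≤ ⁅H.lowerCentralSeries m, N.lowerCentralSeries (n + 1)⁆ := by
              rw [commutator_comm]
              exact commutator_mono le_rfl (commutator_lowerCentralSeries_le_of_commutator_le hHN n)
          _ ≤ N.lowerCentralSeries (m + 1 + n + 1) := by
              convert ih (n + 1) using 2; omega
    · calc ⁅⁅N.lowerCentralSeries n, H.lowerCentralSeries m⁆, H⁆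
            ≤ ⁅H, N.lowerCentralSeries (m + n + 1)⁆ := by
              rw [commutator_comm _ H, commutator_comm _ (H.lowerCentralSeries m)]
              exact commutator_mono le_rfl (ih n)
          _ ≤ N.lowerCentralSeries (m + 1 + n + 1) := by
              convert commutator_lowerCentralSeries_le_of_commutator_le hHN (m + n + 1) using 2
              omega

variable (hHN : ⁅H, N⁆ ≤ ⁅N, N⁆) (hNH : N ⊔ H = ⊤)
include hHN hNH

theorem commutator_top_lowerCentralSeries_le (n : ℕ) :
    ⁅(⊤ : Subgroup G), N.lowerCentralSeries n⁆ ≤ N.lowerCentralSeries (n + 1) := by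
  rw [commutator_le]
  intro g _ x hx
  obtain ⟨a, ha, h, hh, rfl⟩ := mem_sup_of_normal_left.mp (hNH ▸ mem_top g)
  have hhx : ⁅h, x⁆ ∈ N.lowerCentralSeries (n + 1) :=
    commutator_lowerCentralSeries_le_of_commutator_le hHN n (commutator_mem_commutator hh hx)
  have hax : ⁅a, x⁆ ∈ N.lowerCentralSeries (n + 1) := by
    rw [lowerCentralSeries_succ, commutator_comm]
    exact commutator_mem_commutator ha hx
  rw [show ⁅a * h, x⁆ = a * ⁅h, x⁆ * a⁻¹ * ⁅a, x⁆ by group]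
  exact mul_mem (Normal.conj_mem inferInstance _ hhx a) hax

theorem commutator_mem_sup_lowerCentralSeries {n : ℕ} {x : G}
    (hx : x ∈ N.lowerCentralSeries n ⊔ H.lowerCentralSeries n) (g : G) :
    ⁅x, g⁆ ∈ N.lowerCentralSeries (n + 1) ⊔ H.lowerCentralSeries (n + 1) := by
  obtain ⟨a, ha, k, hk, rfl⟩ := mem_sup_of_normal_left.mp hx
  obtain ⟨b, hb, h, hh, rfl⟩ := mem_sup_of_normal_left.mp (hNH ▸ mem_top g)
  -- `a` is central modulo `N_{n+1}`, and `b` commutes with `H_n` modulo `N_{n+1}`.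
  have central_of_mem : ∀ y, ⁅a, y⁆ ∈ N.lowerCentralSeries (n + 1) := fun y ↦ by
    rw [← commutatorElement_inv]
    exact inv_mem (commutator_top_lowerCentralSeries_le hHN hNH n
      (commutator_mem_commutator (mem_top y) ha))
  have hHN_mem : ∀ z ∈ H.lowerCentralSeries n, ∀ b ∈ N, ⁅z, b⁆ ∈ N.lowerCentralSeries (n + 1) :=
    fun z hz b hb ↦ commutator_lowerCentralSeries_lowerCentralSeries_le_of_commutator_le hHN n 0
      (commutator_mem_commutator hz hb)
  have hkh : ⁅k, h⁆ ∈ H.lowerCentralSeries (n + 1) := commutator_mem_commutator hk hh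
  have hbkh : ⁅b, ⁅k, h⁆⁆ ∈ N.lowerCentralSeries (n + 1) := by
    rw [← commutatorElement_inv]
    exact inv_mem (hHN_mem _ (H.lowerCentralSeries_antitone n.le_succ hkh) b hb)
  rw [show ⁅a * k, b * h⁆ = ⁅a, ⁅k, b * h⁆⁆ * (⁅k, b⁆ * ⁅b, ⁅k, h⁆⁆ * ⁅k, h⁆) * ⁅a, b * h⁆ by group]
  exact mul_mem (mul_mem (mem_sup_left (central_of_mem _))
    (mul_mem (mul_mem (mem_sup_left (hHN_mem k hk b hb)) (mem_sup_left hbkh)) (mem_sup_right hkh)))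
    (mem_sup_left (central_of_mem _))

theorem top_lowerCentralSeries_eq_sup (n : ℕ) :
    (⊤ : Subgroup G).lowerCentralSeries n = N.lowerCentralSeries n ⊔ H.lowerCentralSeries n := by
  refine le_antisymm ?_
    (sup_le (lowerCentralSeries_mono n le_top) (lowerCentralSeries_mono n le_top))
  exact descending_central_series_ge_lower (fun n ↦ N.lowerCentralSeries n ⊔ H.lowerCentralSeries n)
    ⟨hNH, fun _ _ hx g ↦ commutator_mem_sup_lowerCentralSeries hHN hNH hx g⟩ n

end SemidirectProduct

end Subgroup

namespace MonoidHom

section SplitExtension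

variable {A B C : Type*} [Group A] [Group B] [Group C] {ι : A →* B} {π : B →* C} {s : C →* B}

theorem range_sup_range_eq_top_of_split (hrange : ι.range = π.ker)
    (hs : π.comp s = MonoidHom.id C) : ι.range ⊔ s.range = ⊤ := by
  refine eq_top_iff.mpr fun b _ ↦ ?_
  have hker : b * (s (π b))⁻¹ ∈ ι.range := by
    rw [hrange, mem_ker, map_mul, map_inv, ← comp_apply, hs,
      id_apply, mul_inv_cancel]
  simpa using mul_mem_sup hker (s.mem_range.mpr ⟨π b, rfl⟩)

theorem exists_mul_eq_of_mem_top_lowerCentralSeries (hrange : ι.range = π.ker)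
    (hs : π.comp s = MonoidHom.id C) (hCA : ⁅s.range, ι.range⁆ ≤ ⁅ι.range, ι.range⁆) {n : ℕ} {b : B}
    (hb : b ∈ (⊤ : Subgroup B).lowerCentralSeries n) :
    ∃ a ∈ (⊤ : Subgroup A).lowerCentralSeries n, ∃ c ∈ (⊤ : Subgroup C).lowerCentralSeries n,
      ι a * s c = b := by
  have : ι.range.Normal := hrange ▸ π.normal_ker
  rw [Subgroup.top_lowerCentralSeries_eq_sup hCA (range_sup_range_eq_top_of_split hrange hs)] at hb
  obtain ⟨x, hx, y, hy, rfl⟩ := mem_sup_of_normal_left.mp hb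
  rw [range_eq_map, ← map_lowerCentralSeries] at hx hy
  obtain ⟨a, ha, rfl⟩ := hx
  obtain ⟨c, hc, rfl⟩ := hy
  exact ⟨a, ha, c, hc, rfl⟩

end SplitExtension

end MonoidHom

theorem falk_randell_lcs_exact_general
    {A B C : Type*} [Group A] [Group B] [Group C]
    (ι : A →* B) (π : B →* C) (s : C →* B)
    (hι : Function.Injective ι)
    (hrange : ι.range = π.ker)
    (hs : π.comp s = MonoidHom.id C)
    (hCA : ⁅s.range, ι.range⁆ ≤ ⁅ι.range, ι.range⁆)
    (k : ℕ) :
    (∀ a ∈ (⊤ : Subgroup A).lowerCentralSeries (k - 1),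
        ι a ∈ (⊤ : Subgroup B).lowerCentralSeries k → a ∈ (⊤ : Subgroup A).lowerCentralSeries k) ∧
    (∀ c ∈ (⊤ : Subgroup C).lowerCentralSeries (k - 1),
        ∃ b ∈ (⊤ : Subgroup B).lowerCentralSeries (k - 1), π b * c⁻¹ ∈ (⊤ : Subgroup C).lowerCentralSeries k) ∧
    (∀ b ∈ (⊤ : Subgroup B).lowerCentralSeries (k - 1),
        (π b ∈ (⊤ : Subgroup C).lowerCentralSeries k ↔
          ∃ a ∈ (⊤ : Subgroup A).lowerCentralSeries (k - 1), ι a * b⁻¹ ∈ (⊤ : Subgroup B).lowerCentralSeries k)) := by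
  have hπι (a : A) : π (ι a) = 1 := (hrange ▸ ⟨a, rfl⟩ : ι a ∈ π.ker)
  have hπs (c : C) : π (s c) = c := DFunLike.congr_fun hs c
  refine ⟨fun a _ ha ↦ ?_, fun c hc ↦ ⟨s c, apply_mem_top_lowerCentralSeries s hc, ?_⟩,
    fun b hb ↦ ⟨fun hπb ↦ ?_, ?_⟩⟩
  · obtain ⟨a', ha', c, -, hac⟩ :=
      MonoidHom.exists_mul_eq_of_mem_top_lowerCentralSeries hrange hs hCA ha
    obtain rfl : c = 1 := by simpa [hπι, hπs] using congrArg π hac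
    rw [map_one, mul_one, hι.eq_iff] at hac
    exact hac ▸ ha'
  · simp [hπs]
  · obtain ⟨a, ha, c, -, rfl⟩ :=
      MonoidHom.exists_mul_eq_of_mem_top_lowerCentralSeries hrange hs hCA hb
    rw [map_mul, hπι, hπs, one_mul] at hπb
    refine ⟨a, ha, ?_⟩
    rw [show ι a * (ι a * s c)⁻¹ = ι a * s c⁻¹ * (ι a)⁻¹ by rw [map_inv]; group]
    exact (lowerCentralSeries_normal ⊤ k).conj_mem _
      (apply_mem_top_lowerCentralSeries s (inv_mem hπb)) _
  · rintro ⟨a, -, hab⟩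
    simpa [hπι] using apply_mem_top_lowerCentralSeries π hab

/-- Falk–Randell: Let `1 → A → B → C → 1` be a split short exact
sequence of groups (inclusion `ι`, projection `π`, section `s`), with
`[C, A] ⊆ [A, A]` inside `B`. Then for every `k ≥ 1` (with
`G_k = lowerCentralSeries G (k-1)`) the induced sequence
`1 → A_k/A_{k+1} → B_k/B_{k+1} → C_k/C_{k+1} → 1` is exact: the map induced by
`ι` is injective, the map induced by `π` is surjective, and the image of the
former equals the kernel of the latter. -/
theorem falk_randell_lcs_exact
    {A B C : Type*} [Group A] [Group B] [Group C]
    (ι : A →* B) (π : B →* C) (s : C →* B)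
    (hι : Function.Injective ι)
    (hrange : ι.range = π.ker)
    (hs : π.comp s = MonoidHom.id C)
    (hCA : ⁅s.range, ι.range⁆ ≤ ⁅ι.range, ι.range⁆)
    (k : ℕ) (hk : 1 ≤ k) :
    (∀ a ∈ (⊤ : Subgroup A).lowerCentralSeries (k - 1),
        ι a ∈ (⊤ : Subgroup B).lowerCentralSeries k → a ∈ (⊤ : Subgroup A).lowerCentralSeries k) ∧
    (∀ c ∈ (⊤ : Subgroup C).lowerCentralSeries (k - 1),
        ∃ b ∈ (⊤ : Subgroup B).lowerCentralSeries (k - 1), π b * c⁻¹ ∈ (⊤ : Subgroup C).lowerCentralSeries k) ∧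
    (∀ b ∈ (⊤ : Subgroup B).lowerCentralSeries (k - 1),
        (π b ∈ (⊤ : Subgroup C).lowerCentralSeries k ↔
          ∃ a ∈ (⊤ : Subgroup A).lowerCentralSeries (k - 1), ι a * b⁻¹ ∈ (⊤ : Subgroup B).lowerCentralSeries k)) :=
  falk_randell_lcs_exact_general ι π s hι hrange hs hCA k
end

section
/- For all integers k ≥ 2 and m ≥ 2, the Witt numbers satisfy C(k+1, m) ≥ C(k, m). -/
/-!
Write `k · C(k, g) = g ^ k + ∑ μ(k / e) g ^ e`, the sum running over the proper divisors `e` of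
`k`. Since `e ≤ k / 2`, the sum is at most `∑_{e ≤ k/2} g ^ e ≤ 2 g ^ ⌊k/2⌋` in absolute value,
which is negligible against `g ^ k` as soon as `k ≥ 6`: then `C(k + 1, g) ≈ g ^ (k+1) / (k + 1)`
beats `C(k, g) ≈ g ^ k / k`. For `2 ≤ k ≤ 5` the inequality is an explicit polynomial
inequality in `g ≥ 2`.
-/

open ArithmeticFunction Finset
open scoped ArithmeticFunction.Moebius

/-- The Witt number `C(k,g) = (1/k) ∑_{d ∣ k} μ(d) g^(k/d)`, as a rational number. -/
noncomputable def wittNumber (k g : ℕ) : ℚ :=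
  (1 / (k : ℚ)) * ∑ d ∈ k.divisors, (ArithmeticFunction.moebius d : ℚ) * (g : ℚ) ^ (k / d)

theorem Nat.le_div_two_of_mem_properDivisors {d n : ℕ} (h : d ∈ n.properDivisors) :
    d ≤ n / 2 := by
  obtain ⟨⟨c, rfl⟩, hlt⟩ := Nat.mem_properDivisors.mp h
  have hc : 2 ≤ c := by
    by_contra! hc
    interval_cases c <;> simp at hlt
  rw [Nat.le_div_iff_mul_le two_pos]
  exact Nat.mul_le_mul_left d hc

section
variable {R : Type*} [CommRing R] [LinearOrder R] [IsStrictOrderedRing R] {g : R}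

theorem sum_range_succ_pow_le (hg : 2 ≤ g) (n : ℕ) : ∑ i ∈ range (n + 1), g ^ i ≤ 2 * g ^ n := by
  induction n with
  | zero => norm_num
  | succ n ih =>
    rw [sum_range_succ, pow_succ]
    nlinarith [pow_nonneg (zero_le_two.trans hg) n]

theorem abs_sum_moebius_mul_pow_sub_pow_le (hg : 2 ≤ g) (k : ℕ) :
    |∑ d ∈ k.divisors, (μ d : R) * g ^ (k / d) - g ^ k| ≤ 2 * g ^ (k / 2) := by
  rcases eq_or_ne k 0 with rfl | hk
  · norm_num
  have hg0 : 0 ≤ g := zero_le_two.trans hg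
  rw [← Nat.sum_divisorsAntidiagonal (fun d e => (μ d : R) * g ^ e),
    Nat.sum_divisorsAntidiagonal' (fun d e => (μ d : R) * g ^ e),
    ← Nat.cons_self_properDivisors hk, sum_cons, Nat.div_self (Nat.pos_of_ne_zero hk)]
  simp only [moebius_apply_one, Int.cast_one, one_mul, add_sub_cancel_left]
  calc |∑ e ∈ k.properDivisors, (μ (k / e) : R) * g ^ e|
      ≤ ∑ e ∈ k.properDivisors, g ^ e := by
        refine (abs_sum_le_sum_abs _ _).trans (sum_le_sum fun e _ => ?_)
        rw [abs_mul, abs_of_nonneg (pow_nonneg hg0 e)]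
        refine mul_le_of_le_one_left (pow_nonneg hg0 e) ?_
        exact_mod_cast abs_moebius_le_one
    _ ≤ ∑ e ∈ range (k / 2 + 1), g ^ e := by
        refine sum_le_sum_of_subset_of_nonneg (fun e he => ?_) fun e _ _ => pow_nonneg hg0 e
        exact mem_range_succ_iff.mpr (Nat.le_div_two_of_mem_properDivisors he)
    _ ≤ 2 * g ^ (k / 2) := sum_range_succ_pow_le hg _

theorem sum_moebius_mul_pow_mul_succ_le_of_six_le (hg : 2 ≤ g) {k : ℕ} (hk : 6 ≤ k) :
    (∑ d ∈ k.divisors, (μ d : R) * g ^ (k / d)) * (k + 1) ≤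
      (∑ d ∈ (k + 1).divisors, (μ d : R) * g ^ ((k + 1) / d)) * k := by
  have hg0 : 0 ≤ g := zero_le_two.trans hg
  have hupper := (abs_le.mp (abs_sum_moebius_mul_pow_sub_pow_le hg k)).2
  have hlower := (abs_le.mp (abs_sum_moebius_mul_pow_sub_pow_le hg (k + 1))).1
  set A := g ^ (k / 2)
  set B := g ^ ((k + 1) / 2)
  have hAB : A * B = g ^ k := by rw [← pow_add]; congr 1; omega
  have hA_le_B : A ≤ B := pow_le_pow_right₀ (by linarith) (by omega)
  have hA : 8 ≤ A := calc
    (8 : R) = 2 ^ 3 := by norm_num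
    _ ≤ 2 ^ (k / 2) := pow_le_pow_right₀ one_le_two (by omega)
    _ ≤ A := pow_le_pow_left₀ zero_le_two hg _
  have hk' : (6 : R) ≤ k := by exact_mod_cast hk
  have hB : 0 ≤ B := pow_nonneg hg0 _
  -- Using `g ≥ 2` and `A ≤ B`, this reduces to `(k - 1) A ≥ 4 k + 2`.
  have key : (g ^ k + 2 * A) * (k + 1) ≤ (g ^ (k + 1) - 2 * B) * k := by
    rw [pow_succ, ← hAB]
    nlinarith [mul_nonneg (mul_nonneg (sub_nonneg.mpr hg) hB)
        (mul_nonneg (by linarith) (by linarith) : (0 : R) ≤ A * k),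
      mul_nonneg (sub_nonneg.mpr hA) hB,
      mul_nonneg (sub_nonneg.mpr hA_le_B) (by linarith : (0 : R) ≤ k)]
  calc _ ≤ (g ^ k + 2 * A) * (k + 1) := by gcongr; linarith
    _ ≤ (g ^ (k + 1) - 2 * B) * k := key
    _ ≤ _ := by gcongr; linarith

theorem sum_moebius_mul_pow_mul_succ_le_of_lt_six (hg : 2 ≤ g) {k : ℕ} (hk : 2 ≤ k)
    (hk6 : k < 6) :
    (∑ d ∈ k.divisors, (μ d : R) * g ^ (k / d)) * (k + 1) ≤
      (∑ d ∈ (k + 1).divisors, (μ d : R) * g ^ ((k + 1) / d)) * k := by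
  -- After substituting `g = t + 2` every coefficient of the difference is nonnegative.
  obtain ⟨t, ht, rfl⟩ : ∃ t ≥ 0, g = t + 2 := ⟨g - 2, by linarith, by ring⟩
  interval_cases k <;>
    simp [Nat.divisors_ofNat, Nat.prime_five, moebius_apply_of_squarefree, cardFactors_apply,
      Nat.primeFactorsList_ofNat, Nat.squarefree_iff_nodup_primeFactorsList] <;>
    rw [← sub_nonneg] <;> ring_nf <;> positivity

theorem sum_moebius_mul_pow_mul_succ_le (hg : 2 ≤ g) {k : ℕ} (hk : 2 ≤ k) :
    (∑ d ∈ k.divisors, (μ d : R) * g ^ (k / d)) * (k + 1) ≤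
      (∑ d ∈ (k + 1).divisors, (μ d : R) * g ^ ((k + 1) / d)) * k := by
  rcases le_or_gt 6 k with hk6 | hk6
  · exact sum_moebius_mul_pow_mul_succ_le_of_six_le hg hk6
  · exact sum_moebius_mul_pow_mul_succ_le_of_lt_six hg hk hk6

end

/-- For all integers `k ≥ 2` and `m ≥ 2`, `C(k+1, m) ≥ C(k, m)`. -/
theorem wittNumber_succ_ge (k m : ℕ) (hk : 2 ≤ k) (hm : 2 ≤ m) :
    wittNumber k m ≤ wittNumber (k + 1) m := by
  have hk0 : (0 : ℚ) < k := Nat.cast_pos.mpr (by omega)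
  rw [wittNumber, wittNumber, one_div_mul_eq_div, one_div_mul_eq_div,
    div_le_div_iff₀ hk0 (by positivity), Nat.cast_succ]
  exact sum_moebius_mul_pow_mul_succ_le (by exact_mod_cast hm) hk
end
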